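/- arXiv:2004.12578 — 3 statements merged into one kernel-verified Lean document; each statement's English description precedes it below -/
import Mathlib

section
/- For any integrable function f on a finite measure space, there exists an N-function G such that G∘|f| is integrable. -/
open MeasureTheory Set Filter Topology

/-- An N-function: continuous convex `G : [0,∞) → [0,∞)` with `G 0 = 0`, `G t > 0` for `t > 0`,
`G t / t → 0` as `t → 0+` and `G t / t → ∞` as `t → ∞`. -/
def IsNFunction (G : ℝ → ℝ) : Prop :=
  ContinuousOn G (Ici 0) ∧ ConvexOn ℝ (Ici 0) G ∧ (∀ t, 0 ≤ t → 0 ≤ G t) ∧ G 0 = 0 ∧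
  (∀ t, 0 < t → 0 < G t) ∧
  Tendsto (fun t => G t / t) (𝓝[>] 0) (𝓝 0) ∧
  Tendsto (fun t => G t / t) atTop atTop

/-- An Orlicz function: convex `G : [0,∞) → [0,∞)` with `G 0 = 0`, continuous at `0`,
and not identically zero. -/
def IsOrliczFunction (G : ℝ → ℝ) : Prop :=
  ConvexOn ℝ (Ici 0) G ∧ (∀ t, 0 ≤ t → 0 ≤ G t) ∧ G 0 = 0 ∧
  ContinuousWithinAt G (Ici 0) 0 ∧ ∃ t, 0 ≤ t ∧ G t ≠ 0

/-- Decreasing rearrangement of `|f|` with respect to Lebesgue measure on `(0,1)`. -/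
noncomputable def mu01 (f : ℝ → ℝ) (t : ℝ) : ℝ :=
  sInf {s : ℝ | 0 ≤ s ∧ volume {x | x ∈ Ioo (0:ℝ) 1 ∧ s < |f x|} ≤ ENNReal.ofReal t}

/-- Decreasing rearrangement of `|f|` with respect to Lebesgue measure on `(0,∞)`. -/
noncomputable def muInf (f : ℝ → ℝ) (t : ℝ) : ℝ :=
  sInf {s : ℝ | 0 ≤ s ∧ volume {x | x ∈ Ioi (0:ℝ) ∧ s < |f x|} ≤ ENNReal.ofReal t}

/-- Hardy–Littlewood–Pólya submajorization `|f| ≺≺ g` on `(0,1)`. -/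
def Submaj01 (f g : ℝ → ℝ) : Prop :=
  ∀ t ∈ Ioc (0:ℝ) 1,
    ∫⁻ s in Ioo (0:ℝ) t, ENNReal.ofReal (mu01 f s) ≤
      ∫⁻ s in Ioo (0:ℝ) t, ENNReal.ofReal (mu01 g s)

/-- Hardy–Littlewood–Pólya submajorization `|f| ≺≺ g` on `(0,∞)`. -/
def SubmajInf (f g : ℝ → ℝ) : Prop :=
  ∀ t : ℝ, 0 < t →
    ∫⁻ s in Ioo (0:ℝ) t, ENNReal.ofReal (muInf f s) ≤
      ∫⁻ s in Ioo (0:ℝ) t, ENNReal.ofReal (muInf g s)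


/-!
Take `G t = (t - log (1 + t)) + ∑ₖ (t - aₖ)⁺`. The first summand is an N-function near `0` and is
dominated by `t`, so it is integrable along `|f|`. The second vanishes on `[0, 1]`, is convex and
superlinear, and by dominated convergence the thresholds `aₖ → ∞` can be chosen so that
`∫ (|f| - aₖ)⁺ ≤ 2⁻ᵏ`, which makes it integrable along `|f|` as well.
-/

open scoped ENNReal

theorem ConvexOn.tsum {ι E : Type*} [AddCommGroup E] [Module ℝ E] {s : Set E}
    {f : ι → E → ℝ} (hs : Convex ℝ s) (hf : ∀ i, ConvexOn ℝ s (f i))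
    (hsum : ∀ x ∈ s, Summable fun i => f i x) : ConvexOn ℝ s fun x => ∑' i, f i x := by
  refine ⟨hs, fun x hx y hy p q hp hq hpq => ?_⟩
  have hx' := (hsum x hx).mul_left p
  have hy' := (hsum y hy).mul_left q
  simp only [smul_eq_mul]
  rw [← tsum_mul_left, ← tsum_mul_left, ← hx'.tsum_add hy']
  exact (hsum _ (hs hx hy hp hq hpq)).tsum_le_tsum (fun i => (hf i).2 hx hy hp hq hpq) (hx'.add hy')

noncomputable def hingeSum (a : ℕ → ℝ) (t : ℝ) : ℝ := ∑' k, max (t - a k) 0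

section hingeSum

variable {a : ℕ → ℝ}

theorem hinge_eq_zero (ha : ∀ k : ℕ, (k : ℝ) + 1 ≤ a k) {t : ℝ} {k : ℕ} (ht : t ≤ k + 1) :
    max (t - a k) 0 = 0 :=
  max_eq_right (by linarith [ha k])

theorem hingeSum_eq_sum (ha : ∀ k : ℕ, (k : ℝ) + 1 ≤ a k) {t : ℝ} {M : ℕ} (htM : t ≤ M) :
    hingeSum a t = ∑ k ∈ Finset.range M, max (t - a k) 0 :=
  tsum_eq_sum fun k hk => hinge_eq_zero ha <| by
    have : (M : ℝ) ≤ k := by exact_mod_cast not_lt.1 (Finset.mem_range.not.1 hk)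
    linarith

theorem summable_hinge (ha : ∀ k : ℕ, (k : ℝ) + 1 ≤ a k) (t : ℝ) :
    Summable fun k => max (t - a k) 0 :=
  summable_of_ne_finset_zero fun k hk => hinge_eq_zero ha <| by
    have : (⌈t⌉₊ : ℝ) ≤ k := by exact_mod_cast not_lt.1 (Finset.mem_range.not.1 hk)
    linarith [Nat.le_ceil t]

theorem hingeSum_nonneg (t : ℝ) : 0 ≤ hingeSum a t :=
  tsum_nonneg fun _ => le_max_right _ _

theorem hingeSum_eq_zero_of_le_one (ha : ∀ k : ℕ, (k : ℝ) + 1 ≤ a k) {t : ℝ} (ht : t ≤ 1) :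
    hingeSum a t = 0 :=
  (tsum_congr fun k => hinge_eq_zero ha (by linarith [(k.cast_nonneg : (0 : ℝ) ≤ k)])).trans
    tsum_zero

theorem convexOn_hingeSum (ha : ∀ k : ℕ, (k : ℝ) + 1 ≤ a k) : ConvexOn ℝ univ (hingeSum a) :=
  ConvexOn.tsum convex_univ
    (fun k => ((convexOn_id convex_univ).sub (concaveOn_const (a k) convex_univ)).sup
      (convexOn_const 0 convex_univ))
    (fun t _ => summable_hinge ha t)

theorem continuous_hingeSum (ha : ∀ k : ℕ, (k : ℝ) + 1 ≤ a k) : Continuous (hingeSum a) := by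
  refine continuous_iff_continuousAt.2 fun x => ?_
  obtain ⟨M, hM⟩ := exists_nat_gt x
  have hloc : hingeSum a =ᶠ[𝓝 x] fun t => ∑ k ∈ Finset.range M, max (t - a k) 0 := by
    filter_upwards [Iio_mem_nhds hM] with t ht using hingeSum_eq_sum ha ht.le
  exact ContinuousAt.congr (by fun_prop) hloc.symm

theorem sum_sub_le_hingeSum (ha : ∀ k : ℕ, (k : ℝ) + 1 ≤ a k) (K : ℕ) (t : ℝ) :
    ∑ k ∈ Finset.range K, (t - a k) ≤ hingeSum a t :=
  (Finset.sum_le_sum fun _ _ => le_max_left _ _).trans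
    ((summable_hinge ha t).sum_le_tsum _ fun _ _ => le_max_right _ _)

theorem tendsto_hingeSum_div_atTop (ha : ∀ k : ℕ, (k : ℝ) + 1 ≤ a k) :
    Tendsto (fun t => hingeSum a t / t) atTop atTop := by
  refine tendsto_atTop.2 fun b => ?_
  obtain ⟨K, hK⟩ := exists_nat_gt b
  set S := ∑ k ∈ Finset.range K, a k
  have hlim : Tendsto (fun t : ℝ => K - S / t) atTop (𝓝 K) := by
    simpa using (tendsto_const_nhds (x := (K : ℝ))).sub
      ((tendsto_const_nhds (x := S)).div_atTop tendsto_id)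
  filter_upwards [hlim.eventually_const_lt hK, eventually_gt_atTop 0] with t hbt ht
  calc b ≤ K - S / t := hbt.le
    _ = (∑ k ∈ Finset.range K, (t - a k)) / t := by
      rw [Finset.sum_sub_distrib]; field_simp; simp [S]
    _ ≤ hingeSum a t / t := by gcongr; exact sum_sub_le_hingeSum ha K t

theorem ofReal_hingeSum (ha : ∀ k : ℕ, (k : ℝ) + 1 ≤ a k) (t : ℝ) :
    ENNReal.ofReal (hingeSum a t) = ∑' k, ENNReal.ofReal (t - a k) := by
  rw [hingeSum, ENNReal.ofReal_tsum_of_nonneg (fun _ => le_max_right _ _) (summable_hinge ha t)]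
  simp

end hingeSum

noncomputable def subLogOneAdd (t : ℝ) : ℝ := t - Real.log (1 + t)

theorem subLogOneAdd_zero : subLogOneAdd 0 = 0 := by simp [subLogOneAdd]

theorem subLogOneAdd_pos {t : ℝ} (ht : 0 < t) : 0 < subLogOneAdd t := by
  have := Real.log_lt_sub_one_of_pos (by linarith : 0 < 1 + t) (by linarith)
  simp only [subLogOneAdd]; linarith

theorem subLogOneAdd_nonneg {t : ℝ} (ht : 0 ≤ t) : 0 ≤ subLogOneAdd t := by
  rcases ht.eq_or_lt with rfl | ht
  · exact subLogOneAdd_zero.ge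
  · exact (subLogOneAdd_pos ht).le

theorem subLogOneAdd_le_self {t : ℝ} (ht : 0 ≤ t) : subLogOneAdd t ≤ t := by
  have := Real.log_nonneg (by linarith : 1 ≤ 1 + t)
  simp only [subLogOneAdd]; linarith

theorem measurable_subLogOneAdd : Measurable subLogOneAdd := by
  unfold subLogOneAdd; fun_prop

theorem continuousOn_subLogOneAdd : ContinuousOn subLogOneAdd (Ici 0) :=
  continuousOn_id.sub <| (continuousOn_const.add continuousOn_id).log fun t (ht : 0 ≤ t) =>
    (by positivity : (0 : ℝ) < 1 + t).ne'

theorem convexOn_subLogOneAdd : ConvexOn ℝ (Ici 0) subLogOneAdd := by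
  have hlog : ConcaveOn ℝ (Ici 0) (Real.log ∘ fun t => 1 + t) :=
    (strictConcaveOn_log_Ioi.concaveOn.translate_right 1).subset
      (fun t (ht : 0 ≤ t) => show (0 : ℝ) < 1 + t by linarith)
      (convex_Ici 0)
  exact (convexOn_id (convex_Ici 0)).sub hlog

theorem tendsto_subLogOneAdd_div_nhdsGT_zero :
    Tendsto (fun t => subLogOneAdd t / t) (𝓝[>] 0) (𝓝 0) := by
  have hderiv : HasDerivAt subLogOneAdd (1 - 1 / (1 + 0)) 0 :=
    (hasDerivAt_id 0).sub (((hasDerivAt_id 0).const_add 1).log (by norm_num))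
  have := (hasDerivAt_iff_tendsto_slope_zero.1 hderiv).mono_left (nhdsGT_le_nhdsNE 0)
  simpa [subLogOneAdd_zero, div_eq_inv_mul] using this

theorem isNFunction_subLogOneAdd_add_hingeSum {a : ℕ → ℝ} (ha : ∀ k : ℕ, (k : ℝ) + 1 ≤ a k) :
    IsNFunction fun t => subLogOneAdd t + hingeSum a t := by
  refine ⟨continuousOn_subLogOneAdd.add (continuous_hingeSum ha).continuousOn,
    convexOn_subLogOneAdd.add ((convexOn_hingeSum ha).subset (subset_univ _) (convex_Ici 0)),
    fun t ht => add_nonneg (subLogOneAdd_nonneg ht) (hingeSum_nonneg t),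
    by simp [subLogOneAdd_zero, hingeSum_eq_zero_of_le_one ha zero_le_one],
    fun t ht => add_pos_of_pos_of_nonneg (subLogOneAdd_pos ht) (hingeSum_nonneg t), ?_, ?_⟩
  · refine tendsto_subLogOneAdd_div_nhdsGT_zero.congr' ?_
    filter_upwards [Ioo_mem_nhdsGT one_pos] with t ht
    rw [hingeSum_eq_zero_of_le_one ha ht.2.le, add_zero]
  · refine tendsto_atTop_mono' _ ?_ (tendsto_hingeSum_div_atTop ha)
    filter_upwards [eventually_gt_atTop 0] with t ht
    rw [add_div]
    exact le_add_of_nonneg_left (div_nonneg (subLogOneAdd_nonneg ht.le) ht.le)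

section Integrability

variable {Ω : Type*} [MeasurableSpace Ω] {ν : Measure Ω} {f : Ω → ℝ}

-- `ENNReal.ofReal` truncates at `0`, so these integrals are `∫ (|f| - c)⁺ dν`.
theorem tendsto_lintegral_ofReal_abs_sub_atTop (hf : Integrable f ν) :
    Tendsto (fun c : ℝ => ∫⁻ ω, ENNReal.ofReal (|f ω| - c) ∂ν) atTop (𝓝 0) := by
  have hlim : ∀ ω, Tendsto (fun c : ℝ => ENNReal.ofReal (|f ω| - c)) atTop (𝓝 0) := fun ω =>
    tendsto_const_nhds.congr' <| by
      filter_upwards [eventually_ge_atTop |f ω|] with c hc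
      exact (ENNReal.ofReal_eq_zero.2 (by linarith)).symm
  simpa using tendsto_lintegral_filter_of_dominated_convergence' (fun ω => ENNReal.ofReal |f ω|)
    (Eventually.of_forall fun c => (hf.aemeasurable.abs.sub_const c).ennreal_ofReal)
    (by
      filter_upwards [eventually_ge_atTop 0] with c hc
      exact Eventually.of_forall fun ω => ENNReal.ofReal_le_ofReal (by linarith))
    (by simpa [Real.enorm_eq_ofReal_abs] using hf.2.ne)
    (Eventually.of_forall hlim)

theorem exists_seq_lintegral_ofReal_abs_sub_le (hf : Integrable f ν) {ε : ℕ → ℝ≥0∞}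
    (hε : ∀ k, 0 < ε k) :
    ∃ a : ℕ → ℝ, (∀ k : ℕ, (k : ℝ) + 1 ≤ a k) ∧
      ∀ k, ∫⁻ ω, ENNReal.ofReal (|f ω| - a k) ∂ν ≤ ε k := by
  have h k := ((tendsto_lintegral_ofReal_abs_sub_atTop hf).eventually (ge_mem_nhds (hε k))).and
    (eventually_ge_atTop ((k : ℝ) + 1))
  choose a ha using fun k => (h k).exists
  exact ⟨a, fun k => (ha k).2, fun k => (ha k).1⟩

theorem integrable_subLogOneAdd_comp_abs (hf : Integrable f ν) :
    Integrable (fun ω => subLogOneAdd |f ω|) ν :=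
  hf.abs.mono' (measurable_subLogOneAdd.comp_aemeasurable hf.aemeasurable.abs).aestronglyMeasurable
    (Eventually.of_forall fun ω => by
      rw [Real.norm_of_nonneg (subLogOneAdd_nonneg (abs_nonneg _))]
      exact subLogOneAdd_le_self (abs_nonneg _))

theorem integrable_hingeSum_comp_abs {a : ℕ → ℝ} (ha : ∀ k : ℕ, (k : ℝ) + 1 ≤ a k)
    (hf : AEMeasurable f ν) (hsum : ∑' k, ∫⁻ ω, ENNReal.ofReal (|f ω| - a k) ∂ν ≠ ∞) :
    Integrable (fun ω => hingeSum a |f ω|) ν := by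
  refine ⟨((continuous_hingeSum ha).measurable.comp_aemeasurable hf.abs).aestronglyMeasurable, ?_⟩
  rw [hasFiniteIntegral_iff_ofReal (Eventually.of_forall fun ω => hingeSum_nonneg _)]
  simp_rw [ofReal_hingeSum ha]
  rw [lintegral_tsum fun k => (hf.abs.sub_const (a k)).ennreal_ofReal]
  exact hsum.lt_top

end Integrability

theorem stmt3_general {Ω : Type*} [MeasurableSpace Ω] (ν : Measure Ω)
    (f : Ω → ℝ) (hf : Integrable f ν) :
    ∃ G : ℝ → ℝ, IsNFunction G ∧ Integrable (fun ω => G |f ω|) ν := by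
  obtain ⟨a, ha, hle⟩ := exists_seq_lintegral_ofReal_abs_sub_le hf
    (ε := fun k => 2⁻¹ ^ k) fun k => ENNReal.pow_pos (by norm_num) k
  have hsum : ∑' k, ∫⁻ ω, ENNReal.ofReal (|f ω| - a k) ∂ν ≠ ∞ :=
    ne_top_of_le_ne_top (by simp) (ENNReal.tsum_le_tsum hle)
  exact ⟨fun t => subLogOneAdd t + hingeSum a t, isNFunction_subLogOneAdd_add_hingeSum ha,
    (integrable_subLogOneAdd_comp_abs hf).add (integrable_hingeSum_comp_abs ha hf.aemeasurable hsum)⟩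

theorem stmt3 {Ω : Type*} [MeasurableSpace Ω] (ν : Measure Ω) [IsFiniteMeasure ν]
    (f : Ω → ℝ) (hf : Integrable f ν) :
    ∃ G : ℝ → ℝ, IsNFunction G ∧ Integrable (fun ω => G |f ω|) ν :=
  stmt3_general ν f hf
end

section
/- Let K be a bounded subset of L¹(0,1). Suppose there exists a positive function g ∈ L¹(0,1) such that |f| ≺≺ g for all f ∈ K. Then there exists an Orlicz function G with G(t)/t → ∞ as t → ∞ such that sup{∫_0^1 G(|f(s)|) ds : f ∈ K} < ∞. -/
open MeasureTheory Set Filter Topology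

/-!
For `c ≥ 0`, `∫ (|f| - c)⁺` only depends on the distribution of `|f|`, so it equals
`∫ (μ(f) - c)⁺ = ∫₀ᵈ μ(f) - c d` with `d = |{|f| > c}|`; submajorization at `d` bounds this by
`∫ (|g| - c)⁺`, uniformly in `f ∈ K`. Since `g` is integrable, `∫ (|g| - c)⁺ → 0`, so there are
thresholds `c n ≥ n + 1` with `∫ (|g| - c n)⁺ ≤ 2⁻ⁿ`. Then `G t = ∑ₙ (t - c n)⁺` is convex,
vanishes on `[0, 1]`, grows superlinearly, and `∫ G(|f|) ≤ ∑ₙ 2⁻ⁿ = 2` for every `f ∈ K`.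
-/

open scoped ENNReal

noncomputable def distrib01 (f : ℝ → ℝ) (s : ℝ) : ℝ≥0∞ :=
  volume {x | x ∈ Ioo (0:ℝ) 1 ∧ s < |f x|}

lemma distrib01_eq_restrict (f : ℝ → ℝ) (s : ℝ) :
    distrib01 f s = volume.restrict (Ioo 0 1) {x | s < |f x|} := by
  rw [distrib01, Measure.restrict_apply' measurableSet_Ioo, inter_comm]
  rfl

lemma distrib01_antitone (f : ℝ → ℝ) : Antitone (distrib01 f) := fun _ _ hst =>
  measure_mono fun _ hx => ⟨hx.1, hst.trans_lt hx.2⟩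

lemma distrib01_le_one (f : ℝ → ℝ) (s : ℝ) : distrib01 f s ≤ 1 :=
  (measure_mono fun _ hx => hx.1).trans (by simp [Real.volume_Ioo])

lemma distrib01_ne_top (f : ℝ → ℝ) (s : ℝ) : distrib01 f s ≠ ∞ :=
  ((distrib01_le_one f s).trans_lt ENNReal.one_lt_top).ne

lemma toReal_distrib01_le_one (f : ℝ → ℝ) (s : ℝ) : (distrib01 f s).toReal ≤ 1 :=
  ENNReal.toReal_le_of_le_ofReal zero_le_one (by simpa using distrib01_le_one f s)

lemma distrib01_le_of_forall_lt {f : ℝ → ℝ} {s : ℝ} {a : ℝ≥0∞}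
    (h : ∀ s', s < s' → distrib01 f s' ≤ a) : distrib01 f s ≤ a := by
  have hunion : {x | x ∈ Ioo (0:ℝ) 1 ∧ s < |f x|}
      = ⋃ n : ℕ, {x | x ∈ Ioo (0:ℝ) 1 ∧ s + (n + 1 : ℝ)⁻¹ < |f x|} := by
    ext x
    simp only [mem_ofPred_eq, mem_iUnion]
    constructor
    · rintro ⟨hx, hsx⟩
      obtain ⟨n, hn⟩ := exists_nat_one_div_lt (sub_pos.2 hsx)
      exact ⟨n, hx, by rw [← one_div]; linarith⟩
    · rintro ⟨n, hx, hsx⟩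
      exact ⟨hx, lt_of_le_of_lt (le_add_of_nonneg_right (by positivity)) hsx⟩
  have hmono : Monotone fun n : ℕ => {x | x ∈ Ioo (0:ℝ) 1 ∧ s + (n + 1 : ℝ)⁻¹ < |f x|} :=
    fun m n hmn _ hx => ⟨hx.1, lt_of_le_of_lt (by gcongr) hx.2⟩
  rw [distrib01, hunion, hmono.measure_iUnion]
  exact iSup_le fun n => h _ (lt_add_of_pos_right s (by positivity))

section Rearrangement

variable {f : ℝ → ℝ}

lemma exists_distrib01_le (hf : AEMeasurable f (volume.restrict (Ioo 0 1))) {t : ℝ}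
    (ht : 0 < t) : ∃ s, 0 ≤ s ∧ distrib01 f s ≤ ENNReal.ofReal t := by
  have hlim := tendsto_measure_iInter_atTop (μ := volume.restrict (Ioo (0:ℝ) 1))
    (s := fun n : ℕ => {x | (n : ℝ) < |f x|})
    (fun n => nullMeasurableSet_lt aemeasurable_const hf.abs)
    (fun m n hmn x (hx : (n : ℝ) < |f x|) =>
      show (m : ℝ) < |f x| from (Nat.cast_le.2 hmn).trans_lt hx) ⟨0, measure_ne_top _ _⟩
  have hempty : ⋂ n : ℕ, {x | (n : ℝ) < |f x|} = ∅ :=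
    eq_empty_of_forall_notMem fun x hx =>
      (exists_nat_ge |f x|).elim fun n hn => (mem_iInter.1 hx n).not_ge hn
  rw [hempty, measure_empty] at hlim
  obtain ⟨n, hn⟩ := (hlim.eventually (gt_mem_nhds (ENNReal.ofReal_pos.2 ht))).exists
  exact ⟨n, n.cast_nonneg, (distrib01_eq_restrict f n).trans_le hn.le⟩

lemma mu01_nonneg (f : ℝ → ℝ) (t : ℝ) : 0 ≤ mu01 f t :=
  Real.sInf_nonneg fun _ hs => hs.1

lemma mu01_le_iff (hf : AEMeasurable f (volume.restrict (Ioo 0 1))) {t s : ℝ} (ht : 0 < t)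
    (hs : 0 ≤ s) : mu01 f t ≤ s ↔ distrib01 f s ≤ ENNReal.ofReal t := by
  have hbdd : BddBelow {s | 0 ≤ s ∧ distrib01 f s ≤ ENNReal.ofReal t} := ⟨0, fun _ h => h.1⟩
  refine ⟨fun h => distrib01_le_of_forall_lt fun s' hs' => ?_, fun h => csInf_le hbdd ⟨hs, h⟩⟩
  obtain ⟨a, ⟨-, ha⟩, has'⟩ :=
    (csInf_lt_iff hbdd (exists_distrib01_le hf ht)).1 (h.trans_lt hs')
  exact (distrib01_antitone f has'.le).trans ha

lemma lt_mu01_iff (hf : AEMeasurable f (volume.restrict (Ioo 0 1))) {t s : ℝ} (ht : 0 < t)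
    (hs : 0 ≤ s) : s < mu01 f t ↔ t < (distrib01 f s).toReal := by
  rw [← not_le, mu01_le_iff hf ht hs, not_le,
    ENNReal.ofReal_lt_iff_lt_toReal ht.le (distrib01_ne_top f s)]

lemma mu01_antitoneOn (hf : AEMeasurable f (volume.restrict (Ioo 0 1))) :
    AntitoneOn (mu01 f) (Ioi 0) := fun t ht t' ht' htt' => by
  rw [mu01_le_iff hf ht' (mu01_nonneg f t)]
  exact ((mu01_le_iff hf ht (mu01_nonneg f t)).1 le_rfl).trans (ENNReal.ofReal_le_ofReal htt')

lemma mu01_aemeasurable (hf : AEMeasurable f (volume.restrict (Ioo 0 1))) :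
    AEMeasurable (mu01 f) (volume.restrict (Ioo 0 1)) :=
  aemeasurable_restrict_of_antitoneOn measurableSet_Ioo
    ((mu01_antitoneOn hf).mono Ioo_subset_Ioi_self)

lemma restrict_setOf_lt_mu01 (hf : AEMeasurable f (volume.restrict (Ioo 0 1))) {s : ℝ}
    (hs : 0 ≤ s) : volume.restrict (Ioo 0 1) {t | s < mu01 f t} = distrib01 f s := by
  have hset : {t | s < mu01 f t} ∩ Ioo 0 1 = Ioo 0 (distrib01 f s).toReal := by
    ext t
    constructor
    · rintro ⟨hst, ht⟩
      exact ⟨ht.1, (lt_mu01_iff hf ht.1 hs).1 hst⟩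
    · rintro ⟨ht0, htd⟩
      exact ⟨(lt_mu01_iff hf ht0 hs).2 htd, ht0, htd.trans_le (toReal_distrib01_le_one f s)⟩
  rw [Measure.restrict_apply' measurableSet_Ioo, hset, Real.volume_Ioo, sub_zero,
    ENNReal.ofReal_toReal (distrib01_ne_top f s)]

end Rearrangement

section LayerCake

variable {α β : Type*} [MeasurableSpace α] [MeasurableSpace β]

lemma lintegral_ofReal_sub_eq_lintegral_meas_lt {μ : Measure α} {F : α → ℝ}
    (hF : AEMeasurable F μ) (c : ℝ) :
    ∫⁻ x, ENNReal.ofReal (F x - c) ∂μ = ∫⁻ t in Ioi 0, μ {x | c + t < F x} := by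
  have hmax : ∀ x, ENNReal.ofReal (F x - c) = ENNReal.ofReal (max (F x - c) 0) := by simp
  simp_rw [hmax]
  rw [lintegral_eq_lintegral_meas_lt μ (f := fun x => max (F x - c) 0)
    (ae_of_all _ fun _ => le_max_right _ _) ((hF.sub_const c).max aemeasurable_const)]
  refine setLIntegral_congr_fun measurableSet_Ioi fun t (ht : 0 < t) => ?_
  congr 1
  ext x
  simp only [mem_ofPred_eq, lt_max_iff, ht.not_gt, or_false]
  constructor <;> intro h <;> linarith

lemma lintegral_ofReal_sub_eq_of_meas_lt_eq {μ : Measure α} {ν : Measure β} {F : α → ℝ}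
    {G : β → ℝ} (hF : AEMeasurable F μ) (hG : AEMeasurable G ν) {c : ℝ}
    (h : ∀ s, c < s → μ {x | s < F x} = ν {y | s < G y}) :
    ∫⁻ x, ENNReal.ofReal (F x - c) ∂μ = ∫⁻ y, ENNReal.ofReal (G y - c) ∂ν := by
  rw [lintegral_ofReal_sub_eq_lintegral_meas_lt hF, lintegral_ofReal_sub_eq_lintegral_meas_lt hG]
  exact setLIntegral_congr_fun measurableSet_Ioi fun t (ht : 0 < t) => h _ (by linarith)

end LayerCake

section Submajorization

variable {f g : ℝ → ℝ} {c : ℝ}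

lemma lintegral_ofReal_abs_sub_eq_mu01 (hf : AEMeasurable f (volume.restrict (Ioo 0 1)))
    (hc : 0 ≤ c) :
    ∫⁻ x in Ioo 0 1, ENNReal.ofReal (|f x| - c) = ∫⁻ t in Ioo 0 1, ENNReal.ofReal (mu01 f t - c) :=
  lintegral_ofReal_sub_eq_of_meas_lt_eq hf.abs (mu01_aemeasurable hf) fun s hs => by
    rw [← distrib01_eq_restrict, restrict_setOf_lt_mu01 hf (hc.trans hs.le)]

lemma lintegral_ofReal_mu01_sub_le (hf : AEMeasurable f (volume.restrict (Ioo 0 1)))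
    (hfg : Submaj01 f g) (hc : 0 ≤ c) :
    ∫⁻ t in Ioo 0 1, ENNReal.ofReal (mu01 f t - c)
      ≤ ∫⁻ t in Ioo 0 1, ENNReal.ofReal (mu01 g t - c) := by
  -- `mu01 f > c` exactly on `(0, d)`, so the left side is `∫₀ᵈ mu01 f - c d`; compare with
  -- `∫₀ᵈ mu01 g - c d` by submajorization at `d`.
  set d := (distrib01 f c).toReal
  have hd1 : d ≤ 1 := toReal_distrib01_le_one f c
  have hsupp : ∫⁻ t in Ioo 0 1, ENNReal.ofReal (mu01 f t - c)
      = ∫⁻ t in Ioo 0 d, ENNReal.ofReal (mu01 f t - c) := by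
    rw [← Measure.restrict_restrict_of_subset (Ioo_subset_Ioo_right hd1 : Ioo (0:ℝ) d ⊆ Ioo 0 1),
      ← lintegral_indicator (measurableSet_Ioo (a := (0:ℝ)) (b := d))]
    refine setLIntegral_congr_fun measurableSet_Ioo fun t ht => ?_
    by_cases htd : t < d
    · rw [indicator_of_mem (show t ∈ Ioo 0 d from ⟨ht.1, htd⟩)]
    · rw [indicator_of_notMem fun h => htd h.2, ENNReal.ofReal_eq_zero, sub_nonpos, ← not_lt,
        lt_mu01_iff hf ht.1 hc]
      exact htd
  have hd_nonneg : 0 ≤ d := ENNReal.toReal_nonneg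
  rcases hd_nonneg.eq_or_lt with hd0 | hd0
  · rw [hsupp, ← hd0, Ioo_self, Measure.restrict_empty, lintegral_zero_measure]
    exact zero_le
  have hvol : volume (Ioo (0:ℝ) d) = ENNReal.ofReal d := by simp [Real.volume_Ioo]
  set r := ENNReal.ofReal c * ENNReal.ofReal d
  have hf_eq : ∫⁻ t in Ioo 0 d, ENNReal.ofReal (mu01 f t)
      = (∫⁻ t in Ioo 0 d, ENNReal.ofReal (mu01 f t - c)) + r := calc
    _ = ∫⁻ t in Ioo 0 d, (ENNReal.ofReal (mu01 f t - c) + ENNReal.ofReal c) :=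
        setLIntegral_congr_fun measurableSet_Ioo fun t ht => by
          rw [← ENNReal.ofReal_add (sub_nonneg.2 ((lt_mu01_iff hf ht.1 hc).2 ht.2).le) hc,
            sub_add_cancel]
    _ = _ := by rw [lintegral_add_right _ measurable_const, setLIntegral_const, hvol]
  have hg_le : ∫⁻ t in Ioo 0 d, ENNReal.ofReal (mu01 g t)
      ≤ (∫⁻ t in Ioo 0 1, ENNReal.ofReal (mu01 g t - c)) + r := calc
    _ ≤ ∫⁻ t in Ioo 0 d, (ENNReal.ofReal (mu01 g t - c) + ENNReal.ofReal c) :=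
        lintegral_mono fun t => by simpa using ENNReal.ofReal_add_le (p := mu01 g t - c) (q := c)
    _ = (∫⁻ t in Ioo 0 d, ENNReal.ofReal (mu01 g t - c)) + r := by
        rw [lintegral_add_right _ measurable_const, setLIntegral_const, hvol]
    _ ≤ _ := by
        gcongr ?_ + _
        exact lintegral_mono_set (Ioo_subset_Ioo_right hd1)
  rw [hsupp, ← ENNReal.add_le_add_iff_right (by finiteness : r ≠ ∞), ← hf_eq]
  exact (hfg d ⟨hd0, hd1⟩).trans hg_le

lemma lintegral_ofReal_abs_sub_le_of_submaj01 (hf : AEMeasurable f (volume.restrict (Ioo 0 1)))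
    (hg : AEMeasurable g (volume.restrict (Ioo 0 1))) (hfg : Submaj01 f g) (hc : 0 ≤ c) :
    ∫⁻ x in Ioo 0 1, ENNReal.ofReal (|f x| - c) ≤ ∫⁻ x in Ioo 0 1, ENNReal.ofReal (|g x| - c) := by
  rw [lintegral_ofReal_abs_sub_eq_mu01 hf hc, lintegral_ofReal_abs_sub_eq_mu01 hg hc]
  exact lintegral_ofReal_mu01_sub_le hf hfg hc

end Submajorization

section Tails

variable {α : Type*} [MeasurableSpace α] {μ : Measure α} {F : α → ℝ}

lemma tendsto_lintegral_ofReal_sub_atTop (hF : Integrable F μ) :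
    Tendsto (fun c : ℝ => ∫⁻ x, ENNReal.ofReal (F x - c) ∂μ) atTop (𝓝 0) := by
  have hlim : ∀ x, Tendsto (fun c : ℝ => ENNReal.ofReal (F x - c)) atTop (𝓝 0) := fun x =>
    tendsto_const_nhds.congr' <| (eventually_ge_atTop (F x)).mono fun c hc =>
      (ENNReal.ofReal_eq_zero.2 (by linarith)).symm
  simpa using tendsto_lintegral_filter_of_dominated_convergence' (fun x => ENNReal.ofReal (F x))
    (.of_forall fun c => (hF.aemeasurable.sub_const c).ennreal_ofReal)
    ((eventually_ge_atTop 0).mono fun c hc =>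
      ae_of_all _ fun x => ENNReal.ofReal_le_ofReal (by linarith))
    hF.lintegral_lt_top.ne (ae_of_all _ hlim)

lemma exists_thresholds_lintegral_ofReal_sub_le (hF : Integrable F μ) :
    ∃ c : ℕ → ℝ, (∀ n : ℕ, (n : ℝ) + 1 ≤ c n) ∧
      ∀ n, ∫⁻ x, ENNReal.ofReal (F x - c n) ∂μ ≤ 2⁻¹ ^ n := by
  have h n := (((tendsto_lintegral_ofReal_sub_atTop hF).eventually
    (gt_mem_nhds (ENNReal.pow_pos (by norm_num : (0 : ℝ≥0∞) < 2⁻¹) n))).and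
    (eventually_ge_atTop ((n : ℝ) + 1))).exists
  choose c hc using h
  exact ⟨c, fun n => (hc n).2, fun n => (hc n).1.le⟩

end Tails

lemma convexOn_tsum {ι E : Type*} [AddCommMonoid E] [Module ℝ E] {s : Set E} {φ : ι → E → ℝ}
    (hφ : ∀ i, ConvexOn ℝ s (φ i)) (hs : Convex ℝ s) (hsum : ∀ x ∈ s, Summable fun i => φ i x) :
    ConvexOn ℝ s fun x => ∑' i, φ i x := by
  refine ⟨hs, fun x hx y hy a b ha hb hab => ?_⟩
  simp only [smul_eq_mul]
  calc ∑' i, φ i (a • x + b • y)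
      ≤ ∑' i, (a * φ i x + b * φ i y) :=
        (hsum _ (hs hx hy ha hb hab)).tsum_le_tsum (fun i => (hφ i).2 hx hy ha hb hab)
          (((hsum x hx).mul_left a).add ((hsum y hy).mul_left b))
    _ = a * ∑' i, φ i x + b * ∑' i, φ i y := by
        rw [((hsum x hx).mul_left a).tsum_add ((hsum y hy).mul_left b), tsum_mul_left,
          tsum_mul_left]

noncomputable def orliczOfThresholds (c : ℕ → ℝ) (t : ℝ) : ℝ :=
  ∑' n, max (t - c n) 0

section Thresholds

variable {c : ℕ → ℝ}

lemma summable_max_sub_thresholds (hc : ∀ n : ℕ, (n : ℝ) + 1 ≤ c n) (t : ℝ) :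
    Summable fun n => max (t - c n) 0 := by
  refine summable_of_ne_finset_zero (s := Finset.range ⌈t⌉₊) fun n hn => ?_
  have htn : t ≤ n := (Nat.le_ceil t).trans (Nat.cast_le.2 (not_lt.1 (Finset.mem_range.not.1 hn)))
  exact max_eq_right (by linarith [hc n])

lemma orliczOfThresholds_nonneg (t : ℝ) : 0 ≤ orliczOfThresholds c t :=
  tsum_nonneg fun _ => le_max_right _ _

lemma orliczOfThresholds_eq_zero {t : ℝ} (ht : ∀ n, t ≤ c n) : orliczOfThresholds c t = 0 := by
  simp [orliczOfThresholds, max_eq_right (sub_nonpos.2 (ht _))]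

lemma convexOn_orliczOfThresholds (hc : ∀ n : ℕ, (n : ℝ) + 1 ≤ c n) :
    ConvexOn ℝ univ (orliczOfThresholds c) :=
  convexOn_tsum (fun _ => (convexOn_id convex_univ |>.sub (concaveOn_const _ convex_univ)).sup
    (convexOn_const 0 convex_univ)) convex_univ fun t _ => summable_max_sub_thresholds hc t

lemma nat_mul_sub_sum_le_orliczOfThresholds (hc : ∀ n : ℕ, (n : ℝ) + 1 ≤ c n) (N : ℕ) (t : ℝ) :
    N * t - ∑ n ∈ Finset.range N, c n ≤ orliczOfThresholds c t := calc
  _ = ∑ n ∈ Finset.range N, (t - c n) := by simp [Finset.sum_sub_distrib]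
  _ ≤ ∑ n ∈ Finset.range N, max (t - c n) 0 := Finset.sum_le_sum fun _ _ => le_max_left _ _
  _ ≤ _ := (summable_max_sub_thresholds hc t).sum_le_tsum _ fun _ _ => le_max_right _ _

lemma tendsto_orliczOfThresholds_div_atTop (hc : ∀ n : ℕ, (n : ℝ) + 1 ≤ c n) :
    Tendsto (fun t => orliczOfThresholds c t / t) atTop atTop := by
  refine tendsto_atTop.2 fun C => ?_
  obtain ⟨N, hN⟩ := exists_nat_ge (C + 1)
  set S := ∑ n ∈ Finset.range N, c n
  filter_upwards [eventually_ge_atTop (max S 1)] with t ht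
  have ht0 : 0 < t := zero_lt_one.trans_le (le_of_max_le_right ht)
  rw [le_div_iff₀ ht0]
  nlinarith [nat_mul_sub_sum_le_orliczOfThresholds hc N t, le_of_max_le_left ht]

lemma isOrliczFunction_orliczOfThresholds (hc : ∀ n : ℕ, (n : ℝ) + 1 ≤ c n) :
    IsOrliczFunction (orliczOfThresholds c) := by
  have hc1 : ∀ n, 1 ≤ c n := fun n => by linarith [hc n, (n.cast_nonneg : (0 : ℝ) ≤ n)]
  have hzero : ∀ t ≤ 1, orliczOfThresholds c t = 0 := fun t ht =>
    orliczOfThresholds_eq_zero fun n => ht.trans (hc1 n)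
  refine ⟨(convexOn_orliczOfThresholds hc).subset (subset_univ _) (convex_Ici 0),
    fun t _ => orliczOfThresholds_nonneg t, hzero 0 zero_le_one, ?_, c 0 + 1, ?_, ?_⟩
  · refine (continuousWithinAt_const (b := (0 : ℝ))).congr_of_eventuallyEq ?_ (hzero 0 zero_le_one)
    filter_upwards [nhdsWithin_le_nhds (Iio_mem_nhds one_pos)] with t ht
    exact hzero t ht.le
  · linarith [hc1 0]
  · refine (zero_lt_one.trans_le ?_).ne'
    simpa [orliczOfThresholds] using (summable_max_sub_thresholds hc (c 0 + 1)).le_tsum 0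
      fun _ _ => le_max_right _ _

lemma lintegral_ofReal_orliczOfThresholds {α : Type*} [MeasurableSpace α] {μ : Measure α}
    {F : α → ℝ} (hc : ∀ n : ℕ, (n : ℝ) + 1 ≤ c n) (hF : AEMeasurable F μ) :
    ∫⁻ x, ENNReal.ofReal (orliczOfThresholds c (F x)) ∂μ
      = ∑' n, ∫⁻ x, ENNReal.ofReal (F x - c n) ∂μ := by
  simp_rw [orliczOfThresholds, ENNReal.ofReal_tsum_of_nonneg (fun _ => le_max_right _ _)
    (summable_max_sub_thresholds hc _)]
  rw [lintegral_tsum fun n => ((hF.sub_const _).max aemeasurable_const).ennreal_ofReal]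
  simp

end Thresholds

theorem stmt6_general (K : Set (ℝ → ℝ))
    (hK : ∀ f ∈ K, IntegrableOn f (Ioo 0 1) volume)
    (g : ℝ → ℝ)
    (hgi : IntegrableOn g (Ioo 0 1) volume)
    (hmaj : ∀ f ∈ K, Submaj01 f g) :
    ∃ G : ℝ → ℝ, IsOrliczFunction G ∧ Tendsto (fun t => G t / t) atTop atTop ∧
      ∃ C : ℝ, ∀ f ∈ K,
        ∫⁻ s in Ioo (0:ℝ) 1, ENNReal.ofReal (G |f s|) ≤ ENNReal.ofReal C := by
  obtain ⟨c, hc, hgc⟩ := exists_thresholds_lintegral_ofReal_sub_le hgi.abs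
  refine ⟨orliczOfThresholds c, isOrliczFunction_orliczOfThresholds hc,
    tendsto_orliczOfThresholds_div_atTop hc, 2, fun f hf => ?_⟩
  have hc0 : ∀ n : ℕ, 0 ≤ c n := fun n => (by positivity : (0 : ℝ) ≤ n + 1).trans (hc n)
  calc ∫⁻ s in Ioo 0 1, ENNReal.ofReal (orliczOfThresholds c |f s|)
      = ∑' n, ∫⁻ s in Ioo 0 1, ENNReal.ofReal (|f s| - c n) :=
        lintegral_ofReal_orliczOfThresholds hc (hK f hf).aemeasurable.abs
    _ ≤ ∑' n : ℕ, (2⁻¹ : ℝ≥0∞) ^ n := ENNReal.tsum_le_tsum fun n =>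
        (lintegral_ofReal_abs_sub_le_of_submaj01 (hK f hf).aemeasurable hgi.aemeasurable
          (hmaj f hf) (hc0 n)).trans (hgc n)
    _ = ENNReal.ofReal 2 := by
        rw [ENNReal.tsum_geometric, ENNReal.one_sub_inv_two, inv_inv, ENNReal.ofReal_ofNat]

theorem stmt6 (K : Set (ℝ → ℝ))
    (hK : ∀ f ∈ K, IntegrableOn f (Ioo 0 1) volume)
    (hKb : ∃ C : ℝ, ∀ f ∈ K, ∫ x in Ioo (0:ℝ) 1, |f x| ≤ C)
    (g : ℝ → ℝ) (hg0 : ∀ x ∈ Ioo (0:ℝ) 1, 0 < g x)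
    (hgi : IntegrableOn g (Ioo 0 1) volume)
    (hmaj : ∀ f ∈ K, Submaj01 f g) :
    ∃ G : ℝ → ℝ, IsOrliczFunction G ∧ Tendsto (fun t => G t / t) atTop atTop ∧
      ∃ C : ℝ, ∀ f ∈ K,
        ∫⁻ s in Ioo (0:ℝ) 1, ENNReal.ofReal (G |f s|) ≤ ENNReal.ofReal C :=
  stmt6_general K hK g hgi hmaj
end

section
/- Let K be a bounded subset of L¹(0,∞) satisfying sup_{f∈K} ∫_N^∞ μ(s,f) ds → 0 as N → ∞, and suppose there exists an Orlicz function G with G(t)/t → ∞ as t → ∞ such that sup{∫_0^∞ G(|f|) ds : f ∈ K} < ∞. Then there exists a positive g ∈ L¹(0,∞) such that |f| ≺≺ g for all f ∈ K. -/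
open MeasureTheory Set Filter Topology

open scoped ENNReal

/-!
Near `0`, the de la Vallée-Poussin estimate `u - M ≤ (M / G M) G u` for the superlinear convex `G`
combines with the inequality `∫ (μ(f) - M)₊ ≤ ∫ (|f| - M)₊` (compare distribution functions in
the layer-cake formula) to give `∫_0^t μ(s,f) ds ≤ M t + (M / G M) sup_K ∫ G(|f|)`, which is
uniformly small for `t` small once `M` is large; for all `t` it is bounded by `sup_K ‖f‖₁`.
Choosing `t_n → 0` with `∫_0^{t_n} μ(f) ≤ 2^{-n}` on `K`, the step function
`g = e^{-x} + ∑ m_n t_n⁻¹ 1_{(0,t_n)}`, with masses `m_0 = sup_K ‖f‖₁`, `m_{n+1} = 2^{-n}`,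
is integrable and satisfies `∫_0^t μ(g) ≥ m_n` as soon as `t_n ≤ t`.
-/

section Rearrangement

variable {f : ℝ → ℝ}

lemma muInf_le {t s : ℝ} (hs : 0 ≤ s)
    (h : volume {x | x ∈ Ioi (0:ℝ) ∧ s < |f x|} ≤ ENNReal.ofReal t) : muInf f t ≤ s :=
  csInf_le ⟨0, fun _ hr => hr.1⟩ ⟨hs, h⟩

lemma muInf_setOf_nonempty (hf : IntegrableOn f (Ioi 0)) {t : ℝ} (ht : 0 < t) :
    {s : ℝ | 0 ≤ s ∧ volume {x | x ∈ Ioi (0:ℝ) ∧ s < |f x|} ≤ ENNReal.ofReal t}.Nonempty := by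
  set I := ∫⁻ x in Ioi (0:ℝ), ENNReal.ofReal |f x|
  have hI : I ≠ ∞ := (hf.abs.lintegral_lt_top).ne
  set s := (I.toReal + 1) / t
  have hs : 0 < s := by positivity
  refine ⟨s, hs.le, ?_⟩
  calc volume {x | x ∈ Ioi (0:ℝ) ∧ s < |f x|}
      ≤ volume.restrict (Ioi 0) {x | ENNReal.ofReal s ≤ ENNReal.ofReal |f x|} := by
        rw [Measure.restrict_apply' measurableSet_Ioi]
        exact measure_mono fun x ⟨hx, hsx⟩ => ⟨ENNReal.ofReal_le_ofReal hsx.le, hx⟩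
    _ ≤ I / ENNReal.ofReal s :=
        meas_ge_le_lintegral_div hf.abs.aemeasurable.ennreal_ofReal (by simpa using hs)
          ENNReal.ofReal_ne_top
    _ ≤ ENNReal.ofReal t := by
        refine ENNReal.div_le_of_le_mul ?_
        rw [← ENNReal.ofReal_mul ht.le, mul_div_cancel₀ _ ht.ne']
        exact (ENNReal.le_ofReal_iff_toReal_le hI (by positivity)).mpr (by linarith)

lemma muInf_antitoneOn (hf : IntegrableOn f (Ioi 0)) : AntitoneOn (muInf f) (Ioi 0) :=
  fun _ ht _ _ hts => csInf_le_csInf ⟨0, fun _ hr => hr.1⟩ (muInf_setOf_nonempty hf ht)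
    fun _ ⟨h0, hle⟩ => ⟨h0, hle.trans (ENNReal.ofReal_le_ofReal hts)⟩

lemma volume_lt_muInf_le {s : ℝ} (hs : 0 ≤ s) :
    volume ({t | s < muInf f t} ∩ Ioi 0) ≤ volume ({x | s < |f x|} ∩ Ioi 0) := by
  set D := volume ({x | s < |f x|} ∩ Ioi 0)
  rcases eq_or_ne D ∞ with hD | hD
  · exact hD ▸ le_top
  calc volume ({t | s < muInf f t} ∩ Ioi 0) ≤ volume (Ioo 0 D.toReal) := by
        refine measure_mono fun t ⟨hst, ht⟩ => ⟨ht, ?_⟩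
        by_contra! hDt
        refine hst.not_ge (muInf_le hs ?_)
        change volume (Ioi 0 ∩ {x | s < |f x|}) ≤ _
        rw [inter_comm]
        exact (ENNReal.le_ofReal_iff_toReal_le hD (le_trans ENNReal.toReal_nonneg hDt)).mpr hDt
    _ = D := by rw [Real.volume_Ioo, sub_zero, ENNReal.ofReal_toReal hD]

lemma le_muInf_of_le_abs (hf : IntegrableOn f (Ioi 0)) {a c s : ℝ} (hs : 0 < s) (hsa : s < a)
    (hc : ∀ x ∈ Ioo 0 a, c ≤ |f x|) : c ≤ muInf f s := by
  refine le_csInf (muInf_setOf_nonempty hf hs) ?_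
  rintro r ⟨-, hr⟩
  by_contra! hrc
  have hsub : Ioo 0 a ⊆ {x | x ∈ Ioi 0 ∧ r < |f x|} := fun x hx => ⟨hx.1, hrc.trans_le (hc x hx)⟩
  have hvol : volume (Ioo 0 a) ≤ ENNReal.ofReal s := (measure_mono hsub).trans hr
  rw [Real.volume_Ioo, sub_zero, ENNReal.ofReal_le_ofReal_iff hs.le] at hvol
  linarith

lemma ofReal_mul_le_lintegral_muInf (hf : IntegrableOn f (Ioi 0)) {a c t : ℝ} (hat : a ≤ t)
    (hc : ∀ x ∈ Ioo 0 a, c ≤ |f x|) :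
    ENNReal.ofReal c * ENNReal.ofReal a ≤ ∫⁻ s in Ioo 0 t, ENNReal.ofReal (muInf f s) :=
  calc ENNReal.ofReal c * ENNReal.ofReal a = ∫⁻ _ in Ioo 0 a, ENNReal.ofReal c := by
        rw [setLIntegral_const, Real.volume_Ioo, sub_zero]
    _ ≤ ∫⁻ s in Ioo 0 a, ENNReal.ofReal (muInf f s) :=
        setLIntegral_mono' measurableSet_Ioo fun _ hs =>
          ENNReal.ofReal_le_ofReal (le_muInf_of_le_abs hf hs.1 hs.2 hc)
    _ ≤ ∫⁻ s in Ioo 0 t, ENNReal.ofReal (muInf f s) := lintegral_mono_set (Ioo_subset_Ioo_right hat)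

end Rearrangement

section LayerCake

variable {α β : Type*} [MeasurableSpace α] [MeasurableSpace β]

lemma lintegral_ofReal_eq_lintegral_meas_lt (μ : Measure α) {u : α → ℝ} (hu : AEMeasurable u μ) :
    ∫⁻ x, ENNReal.ofReal (u x) ∂μ = ∫⁻ s in Ioi 0, μ {x | s < u x} := by
  have h := lintegral_eq_lintegral_meas_lt μ (ae_of_all _ fun x => le_max_right (u x) 0)
    (hu.max aemeasurable_const)
  simp only [ENNReal.ofReal_max, ENNReal.ofReal_zero, zero_le, max_eq_left] at h
  rw [h]
  refine setLIntegral_congr_fun measurableSet_Ioi fun s hs => ?_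
  simp only [lt_max_iff, lt_asymm (mem_Ioi.mp hs), or_false]

lemma lintegral_ofReal_le_of_meas_lt_le {μ : Measure α} {ν : Measure β} {u : α → ℝ} {v : β → ℝ}
    (hu : AEMeasurable u μ) (hv : AEMeasurable v ν)
    (h : ∀ s > 0, μ {x | s < u x} ≤ ν {y | s < v y}) :
    ∫⁻ x, ENNReal.ofReal (u x) ∂μ ≤ ∫⁻ y, ENNReal.ofReal (v y) ∂ν := by
  rw [lintegral_ofReal_eq_lintegral_meas_lt μ hu, lintegral_ofReal_eq_lintegral_meas_lt ν hv]
  exact setLIntegral_mono' measurableSet_Ioi h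

end LayerCake

section Orlicz

variable {f G : ℝ → ℝ}

lemma lintegral_muInf_sub_le (hf : IntegrableOn f (Ioi 0)) {M : ℝ} (hM : 0 ≤ M) :
    ∫⁻ t in Ioi 0, ENNReal.ofReal (muInf f t - M) ≤
      ∫⁻ x in Ioi 0, ENNReal.ofReal (|f x| - M) := by
  refine lintegral_ofReal_le_of_meas_lt_le
    ((aemeasurable_restrict_of_antitoneOn measurableSet_Ioi (muInf_antitoneOn hf)).sub_const M)
    (hf.abs.aemeasurable.sub_const M) fun s hs => ?_
  simp only [Measure.restrict_apply' measurableSet_Ioi, lt_sub_iff_add_lt']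
  exact volume_lt_muInf_le (by positivity)

lemma lintegral_Ioo_muInf_le_integral_abs (hf : IntegrableOn f (Ioi 0)) (t : ℝ) :
    ∫⁻ s in Ioo 0 t, ENNReal.ofReal (muInf f s) ≤ ENNReal.ofReal (∫ x in Ioi 0, |f x|) := by
  rw [ofReal_integral_eq_lintegral_ofReal hf.abs (ae_of_all _ fun x => abs_nonneg (f x))]
  calc ∫⁻ s in Ioo 0 t, ENNReal.ofReal (muInf f s)
      ≤ ∫⁻ s in Ioi 0, ENNReal.ofReal (muInf f s) := lintegral_mono_set Ioo_subset_Ioi_self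
    _ ≤ ∫⁻ x in Ioi 0, ENNReal.ofReal |f x| := by
        simpa only [sub_zero] using lintegral_muInf_sub_le hf le_rfl

lemma sub_le_div_mul_of_convexOn (hG : ConvexOn ℝ (Ici 0) G) (hG0 : G 0 = 0)
    (hGnn : ∀ t, 0 ≤ t → 0 ≤ G t) {M u : ℝ} (hM : 0 ≤ M) (hGM : 0 < G M) (hu : 0 ≤ u) :
    u - M ≤ M / G M * G u := by
  rcases le_or_gt u M with huM | hMu
  · linarith [mul_nonneg (div_nonneg hM hGM.le) (hGnn u hu)]
  have hM0 : 0 < M := hM.lt_of_ne (by rintro rfl; simp [hG0] at hGM)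
  have hslope := hG.secant_mono (a := 0) (mem_Ici.mpr le_rfl) hM hu hM0.ne' (by linarith) hMu.le
  simp only [hG0, sub_zero] at hslope
  rw [div_le_div_iff₀ hM0 (by linarith)] at hslope
  rw [div_mul_eq_mul_div, le_div_iff₀ hGM]
  nlinarith

lemma lintegral_Ioo_muInf_le (hG : ConvexOn ℝ (Ici 0) G) (hG0 : G 0 = 0)
    (hGnn : ∀ t, 0 ≤ t → 0 ≤ G t) {M : ℝ} (hM : 0 ≤ M) (hGM : 0 < G M)
    (hf : IntegrableOn f (Ioi 0)) (t : ℝ) :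
    ∫⁻ s in Ioo 0 t, ENNReal.ofReal (muInf f s) ≤ ENNReal.ofReal (M * t) +
      ENNReal.ofReal (M / G M) * ∫⁻ x in Ioi 0, ENNReal.ofReal (G |f x|) :=
  calc ∫⁻ s in Ioo 0 t, ENNReal.ofReal (muInf f s)
      ≤ ∫⁻ s in Ioo 0 t, (ENNReal.ofReal M + ENNReal.ofReal (muInf f s - M)) :=
        lintegral_mono fun s => by
          simpa using ENNReal.ofReal_add_le (p := M) (q := muInf f s - M)
    _ = ENNReal.ofReal (M * t) + ∫⁻ s in Ioo 0 t, ENNReal.ofReal (muInf f s - M) := by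
        rw [lintegral_add_left measurable_const, setLIntegral_const, Real.volume_Ioo, sub_zero,
          ENNReal.ofReal_mul hM]
    _ ≤ ENNReal.ofReal (M * t) + ∫⁻ x in Ioi 0, ENNReal.ofReal (|f x| - M) :=
        add_le_add le_rfl
          ((lintegral_mono_set Ioo_subset_Ioi_self).trans (lintegral_muInf_sub_le hf hM))
    _ ≤ ENNReal.ofReal (M * t) +
          ∫⁻ x in Ioi 0, ENNReal.ofReal (M / G M) * ENNReal.ofReal (G |f x|) := by
        gcongr with x
        rw [← ENNReal.ofReal_mul (div_nonneg hM hGM.le)]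
        exact ENNReal.ofReal_le_ofReal
          (sub_le_div_mul_of_convexOn hG hG0 hGnn hM hGM (abs_nonneg (f x)))
    _ = _ := by rw [lintegral_const_mul' _ _ ENNReal.ofReal_ne_top]

lemma exists_forall_lintegral_Ioo_muInf_le (hG : ConvexOn ℝ (Ici 0) G) (hG0 : G 0 = 0)
    (hGnn : ∀ t, 0 ≤ t → 0 ≤ G t) (hGt : Tendsto (fun t => G t / t) atTop atTop)
    {D : ℝ≥0∞} (hD : D ≠ ∞) {ε : ℝ} (hε : 0 < ε) :
    ∃ δ > 0, ∀ f : ℝ → ℝ, IntegrableOn f (Ioi 0) →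
      ∫⁻ x in Ioi 0, ENNReal.ofReal (G |f x|) ≤ D →
      ∀ t ≤ δ, ∫⁻ s in Ioo 0 t, ENNReal.ofReal (muInf f s) ≤ ENNReal.ofReal ε := by
  have hsmall : Tendsto (fun M => ENNReal.ofReal (M / G M) * D) atTop (𝓝 0) := by
    simpa [inv_div] using
      ENNReal.Tendsto.mul_const (ENNReal.tendsto_ofReal hGt.inv_tendsto_atTop) (Or.inr hD)
  obtain ⟨M, hMD, hGM, hM⟩ :=
    ((hsmall.eventually (gt_mem_nhds (ENNReal.ofReal_pos.mpr (half_pos hε)))).and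
      ((hGt.eventually_gt_atTop 0).and (eventually_gt_atTop 0))).exists
  refine ⟨ε / (2 * M), by positivity, fun f hf hfD t ht => ?_⟩
  have hMt : M * t ≤ ε / 2 := by
    rw [le_div_iff₀ (by positivity)] at ht
    linarith
  calc ∫⁻ s in Ioo 0 t, ENNReal.ofReal (muInf f s)
      ≤ ENNReal.ofReal (M * t) +
          ENNReal.ofReal (M / G M) * ∫⁻ x in Ioi 0, ENNReal.ofReal (G |f x|) :=
        lintegral_Ioo_muInf_le hG hG0 hGnn hM.le ((div_pos_iff_of_pos_right hM).mp hGM) hf t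
    _ ≤ ENNReal.ofReal (ε / 2) + ENNReal.ofReal (ε / 2) := by
        gcongr
        exact (mul_le_mul' le_rfl hfD).trans hMD.le
    _ = ENNReal.ofReal ε := by rw [← ENNReal.ofReal_add (by positivity) (by positivity), add_halves]

end Orlicz

section StepFunction

noncomputable def stepSum (t : ℕ → ℝ) (c : ℕ → ℝ≥0∞) (x : ℝ) : ℝ≥0∞ :=
  ∑' n, (Ioo 0 (t n)).indicator (fun _ => c n) x

variable {t : ℕ → ℝ} {c : ℕ → ℝ≥0∞}

lemma measurable_stepSum : Measurable (stepSum t c) :=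
  Measurable.tsum fun _ => measurable_const.indicator measurableSet_Ioo

lemma lintegral_stepSum : ∫⁻ x in Ioi 0, stepSum t c x = ∑' n, c n * ENNReal.ofReal (t n) := by
  unfold stepSum
  rw [lintegral_tsum fun n => (measurable_const.indicator measurableSet_Ioo).aemeasurable]
  refine tsum_congr fun n => ?_
  rw [lintegral_indicator_const measurableSet_Ioo, Measure.restrict_apply measurableSet_Ioo,
    inter_eq_left.mpr Ioo_subset_Ioi_self, Real.volume_Ioo, sub_zero]

lemma le_stepSum {n : ℕ} {x : ℝ} (hx : x ∈ Ioo 0 (t n)) : c n ≤ stepSum t c x := by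
  unfold stepSum
  simpa only [indicator_of_mem hx] using
    ENNReal.le_tsum (f := fun k => (Ioo 0 (t k)).indicator (fun _ => c k) x) n

lemma stepSum_ne_top (ht : Tendsto t atTop (𝓝 0)) (hc : ∀ n, c n ≠ ∞) {x : ℝ} (hx : 0 < x) :
    stepSum t c x ≠ ∞ := by
  obtain ⟨N, hN⟩ := eventually_atTop.mp (ht.eventually (gt_mem_nhds hx))
  rw [stepSum, tsum_eq_sum (s := Finset.range N) fun n hn =>
    indicator_of_notMem (fun h => (h.2.trans (hN n (by simpa using hn))).false) _]
  exact ENNReal.sum_ne_top.mpr fun n _ => ne_top_of_le_ne_top (hc n) (indicator_le_self _ _ x)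

end StepFunction

lemma exists_pos_integrableOn_mass_le_lintegral_muInf {t : ℕ → ℝ} (htpos : ∀ n, 0 < t n)
    (ht : Tendsto t atTop (𝓝 0)) {m : ℕ → ℝ≥0∞} (hm : ∑' n, m n ≠ ∞) :
    ∃ g : ℝ → ℝ, (∀ x ∈ Ioi 0, 0 < g x) ∧ IntegrableOn g (Ioi 0) ∧
      ∀ n s, t n ≤ s → m n ≤ ∫⁻ x in Ioo 0 s, ENNReal.ofReal (muInf g x) := by
  set c : ℕ → ℝ≥0∞ := fun n => m n / ENNReal.ofReal (t n)
  have htne : ∀ n, ENNReal.ofReal (t n) ≠ 0 := fun n => by simpa using htpos n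
  have hc : ∀ n, c n ≠ ∞ := fun n =>
    ENNReal.div_ne_top (ENNReal.ne_top_of_tsum_ne_top hm n) (htne n)
  have hcm : ∀ n, c n * ENNReal.ofReal (t n) = m n := fun n =>
    ENNReal.div_mul_cancel (htne n) ENNReal.ofReal_ne_top
  set g : ℝ → ℝ := fun x => Real.exp (-x) + (stepSum t c x).toReal
  have hgint : IntegrableOn g (Ioi 0) := by
    refine IntegrableOn.add (by simpa using exp_neg_integrableOn_Ioi 0 one_pos) ?_
    refine integrable_toReal_of_lintegral_ne_top measurable_stepSum.aemeasurable ?_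
    simpa only [lintegral_stepSum, hcm] using hm
  refine ⟨g, fun x _ => by positivity, hgint, fun n s hs => ?_⟩
  have hgc : ∀ x ∈ Ioo 0 (t n), (c n).toReal ≤ |g x| := fun x hx =>
    calc (c n).toReal ≤ (stepSum t c x).toReal :=
          ENNReal.toReal_mono (stepSum_ne_top ht hc hx.1) (le_stepSum hx)
      _ ≤ g x := le_add_of_nonneg_left (Real.exp_pos _).le
      _ ≤ |g x| := le_abs_self _
  calc m n = ENNReal.ofReal (c n).toReal * ENNReal.ofReal (t n) := by
        rw [ENNReal.ofReal_toReal (hc n), hcm]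
    _ ≤ _ := ofReal_mul_le_lintegral_muInf hgint hs hgc

lemma exists_lt_le_of_tendsto_zero {a : ℕ → ℝ} (ha : Tendsto a atTop (𝓝 0)) {t : ℝ} (ht : 0 < t)
    (h0 : t ≤ a 0) : ∃ n, a (n + 1) < t ∧ t ≤ a n := by
  by_contra! h
  have hle : ∀ n, t ≤ a n := fun n =>
    Nat.rec h0 (fun n ih => le_of_not_gt fun hlt => (h n hlt).not_ge ih) n
  exact ht.not_ge (ge_of_tendsto' ha hle)

lemma exists_pos_integrableOn_forall_le_lintegral_muInf {ι : Type*} (Φ : ι → ℝ → ℝ≥0∞)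
    {C : ℝ≥0∞} (hC : C ≠ ∞) (hΦC : ∀ i t, Φ i t ≤ C)
    (hΦ0 : ∀ ε : ℝ, 0 < ε → ∃ δ > 0, ∀ i, ∀ t ≤ δ, Φ i t ≤ ENNReal.ofReal ε) :
    ∃ g : ℝ → ℝ, (∀ x ∈ Ioi 0, 0 < g x) ∧ IntegrableOn g (Ioi 0) ∧
      ∀ i, ∀ t > 0, Φ i t ≤ ∫⁻ s in Ioo 0 t, ENNReal.ofReal (muInf g s) := by
  choose δ hδpos hδ using fun n : ℕ => hΦ0 ((1 / 2) ^ n) (by positivity)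
  set a : ℕ → ℝ := fun n => min (δ n) ((1 / 2) ^ n)
  have hapos : ∀ n, 0 < a n := fun n => lt_min (hδpos n) (by positivity)
  have ha : Tendsto a atTop (𝓝 0) :=
    squeeze_zero (fun n => (hapos n).le) (fun n => min_le_right _ _)
      (tendsto_pow_atTop_nhds_zero_of_lt_one (by norm_num) (by norm_num))
  -- `m (n + 1)` bounds `Φ` on `(a (n + 1), a n]`, and `m 0 = C` bounds it beyond `a 0`.
  set m : ℕ → ℝ≥0∞ := fun | 0 => C | n + 1 => ENNReal.ofReal ((1 / 2) ^ n)
  have hm : ∑' n, m n ≠ ∞ := by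
    rw [tsum_eq_zero_add' ENNReal.summable]
    simp only [m, ← ENNReal.ofReal_tsum_of_nonneg (fun n => by positivity) summable_geometric_two,
      tsum_geometric_two]
    exact ENNReal.add_ne_top.mpr ⟨hC, ENNReal.ofReal_ne_top⟩
  obtain ⟨g, hgpos, hgint, hg⟩ := exists_pos_integrableOn_mass_le_lintegral_muInf hapos ha hm
  refine ⟨g, hgpos, hgint, fun i t ht => ?_⟩
  rcases le_or_gt (a 0) t with h0 | h0
  · exact (hΦC i t).trans (hg 0 t h0)
  · obtain ⟨n, hn1, hn⟩ := exists_lt_le_of_tendsto_zero ha ht h0.le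
    exact (hδ n i t (hn.trans (min_le_left _ _))).trans (hg (n + 1) t hn1.le)

theorem stmt8_general (K : Set (ℝ → ℝ))
    (hK : ∀ f ∈ K, IntegrableOn f (Ioi 0) volume)
    (hKb : ∃ C : ℝ, ∀ f ∈ K, ∫ x in Ioi (0:ℝ), |f x| ≤ C)
    (G : ℝ → ℝ) (hG : IsOrliczFunction G)
    (hGt : Tendsto (fun t => G t / t) atTop atTop)
    (hsup : ∃ C : ℝ, ∀ f ∈ K,
      ∫⁻ s in Ioi (0:ℝ), ENNReal.ofReal (G |f s|) ≤ ENNReal.ofReal C) :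
    ∃ g : ℝ → ℝ, (∀ x ∈ Ioi (0:ℝ), 0 < g x) ∧ IntegrableOn g (Ioi 0) volume ∧
      ∀ f ∈ K, SubmajInf f g := by
  obtain ⟨hGc, hGnn, hG0, -⟩ := hG
  obtain ⟨C, hC⟩ := hKb
  obtain ⟨D, hD⟩ := hsup
  have hsmall (ε : ℝ) (hε : 0 < ε) : ∃ δ > 0, ∀ f : K, ∀ t ≤ δ,
      ∫⁻ s in Ioo 0 t, ENNReal.ofReal (muInf f s) ≤ ENNReal.ofReal ε := by
    obtain ⟨δ, hδ, h⟩ :=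
      exists_forall_lintegral_Ioo_muInf_le hGc hG0 hGnn hGt ENNReal.ofReal_ne_top hε
    exact ⟨δ, hδ, fun f => h f (hK f f.2) (hD f f.2)⟩
  obtain ⟨g, hgpos, hgint, hg⟩ := exists_pos_integrableOn_forall_le_lintegral_muInf
    (fun (f : K) t => ∫⁻ s in Ioo 0 t, ENNReal.ofReal (muInf f s)) ENNReal.ofReal_ne_top
    (fun f t => (lintegral_Ioo_muInf_le_integral_abs (hK f f.2) t).trans
      (ENNReal.ofReal_le_ofReal (hC f f.2)))
    hsmall
  exact ⟨g, hgpos, hgint, fun f hf => hg ⟨f, hf⟩⟩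

theorem stmt8 (K : Set (ℝ → ℝ))
    (hK : ∀ f ∈ K, IntegrableOn f (Ioi 0) volume)
    (hKb : ∃ C : ℝ, ∀ f ∈ K, ∫ x in Ioi (0:ℝ), |f x| ≤ C)
    (htail : ∀ ε : ℝ, 0 < ε → ∃ N : ℝ, ∀ f ∈ K,
      ∫⁻ s in Ioi N, ENNReal.ofReal (muInf f s) < ENNReal.ofReal ε)
    (G : ℝ → ℝ) (hG : IsOrliczFunction G)
    (hGt : Tendsto (fun t => G t / t) atTop atTop)
    (hsup : ∃ C : ℝ, ∀ f ∈ K,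
      ∫⁻ s in Ioi (0:ℝ), ENNReal.ofReal (G |f s|) ≤ ENNReal.ofReal C) :
    ∃ g : ℝ → ℝ, (∀ x ∈ Ioi (0:ℝ), 0 < g x) ∧ IntegrableOn g (Ioi 0) volume ∧
      ∀ f ∈ K, SubmajInf f g :=
  stmt8_general K hK hKb G hG hGt hsup
end
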